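/- arXiv:1708.09233 — 8 statements merged into one kernel-verified Lean document; each statement's English description precedes it below -/
import Mathlib

section
/- Let Γ be a straight-line drawing of a graph G with vertex-ply h, i.e., for every vertex v let D_v be the open disk centered at v with radius half the length of the longest edge incident to v, and no vertex of G lies in the interior of more than h of the disks D_v. Then no point of the plane lies in the interior of more than 5h of the disks D_v. In particular, the ply of Γ is at most 5 times its vertex-ply. -/
open Real EuclideanGeometry Metric

noncomputable def plyRadius {V : Type*} (G : SimpleGraph V)
    (pos : V → EuclideanSpace ℝ (Fin 2)) (v : V) : ℝ :=
  (1 / 2) * ⨆ w ∈ G.neighborSet v, dist (pos v) (pos w)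

/-- A drawing is empty-ply if no ply-disk contains a vertex other than its center
in its interior. -/
def IsEmptyPly {V : Type*} (G : SimpleGraph V)
    (pos : V → EuclideanSpace ℝ (Fin 2)) : Prop :=
  ∀ u v : V, u ≠ v → plyRadius G pos v ≤ dist (pos u) (pos v)

section PlyAux
open Real Complex ComplexConjugate

/-- re(A * conj B) = |A||B| cos(arg A - arg B). -/
lemma re_mul_conj_eq (A B : ℂ) (hA : A ≠ 0) (hB : B ≠ 0) :
    (A * conj B).re = ‖A‖ * ‖B‖ * Real.cos (A.arg - B.arg) := by
  rw [Real.cos_sub, Complex.cos_arg hA, Complex.sin_arg, Complex.cos_arg hB, Complex.sin_arg]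
  have hA' : ‖A‖ ≠ 0 := by simpa using hA
  have hB' : ‖B‖ ≠ 0 := by simpa using hB
  field_simp [Complex.mul_re, Complex.conj_re, Complex.conj_im]
  rw [Complex.mul_re, Complex.conj_re, Complex.conj_im]; ring

lemma half_le_re (A B : ℂ) (hA : A ≠ 0) (hB : B ≠ 0) (h : |A.arg - B.arg| ≤ π / 3) :
    ‖A‖ * ‖B‖ / 2 ≤ (A * conj B).re := by
  rw [re_mul_conj_eq A B hA hB]
  have h1 : Real.cos (π / 3) ≤ Real.cos |A.arg - B.arg| :=
    Real.cos_le_cos_of_nonneg_of_le_pi (abs_nonneg _)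
      (by linarith [Real.pi_pos]) h
  rw [Real.cos_abs, Real.cos_pi_div_three] at h1
  have := mul_le_mul_of_nonneg_left h1
    (mul_nonneg (norm_nonneg A) (norm_nonneg B))
  nlinarith [norm_nonneg A, norm_nonneg B]

noncomputable def toC (x : EuclideanSpace ℝ (Fin 2)) : ℂ := ⟨x 0, x 1⟩

lemma dist_toC (x y : EuclideanSpace ℝ (Fin 2)) : dist (toC x) (toC y) = dist x y := by
  rw [Complex.dist_eq, EuclideanSpace.dist_eq, Complex.norm_def, Complex.normSq_apply]
  simp [toC, Fin.sum_univ_two, Real.dist_eq, sq_abs]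
  ring_nf

lemma abs_toC_sub (x y : EuclideanSpace ℝ (Fin 2)) :
    ‖toC x - toC y‖ = dist x y := by
  rw [← Complex.dist_eq, dist_toC]

lemma key {V : Type*} [Fintype V] (pos : V → EuclideanSpace ℝ (Fin 2)) (r : V → ℝ) (h : ℕ)
    (hvp : ∀ u : V, {v : V | dist (pos u) (pos v) < r v}.ncard ≤ h)
    (p : EuclideanSpace ℝ (Fin 2)) :
    {v : V | dist p (pos v) < r v}.ncard ≤ 5 * h := by
  set S : Set V := {v : V | dist p (pos v) < r v} with hS
  by_cases hdeg : ∃ w ∈ S, pos w = p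
  · obtain ⟨w0, hw0S, hw0⟩ := hdeg
    have hsub : S ⊆ {v : V | dist (pos w0) (pos v) < r v} := by
      intro w hw; have hw' : dist p (pos w) < r w := hw; simpa [hw0] using hw'
    calc S.ncard ≤ ({v : V | dist (pos w0) (pos v) < r v}).ncard :=
          Set.ncard_le_ncard hsub (Set.toFinite _)
      _ ≤ h := hvp w0
      _ ≤ 5 * h := by omega
  push_neg at hdeg
  rcases S.eq_empty_or_nonempty with hSe | hSne
  · simp [hSe]
  obtain ⟨v, hvS, hvmin⟩ := Set.exists_min_image S (fun w => dist p (pos w)) S.toFinite hSne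
  set z : V → ℂ := fun w => toC (pos w) - toC p with hzdef
  have habs : ∀ w : V, ‖z w‖ = dist p (pos w) := by
    intro w; rw [hzdef]; simp only; rw [abs_toC_sub, dist_comm]
  have hzne : ∀ w ∈ S, z w ≠ 0 := by
    intro w hw hz0
    have : dist p (pos w) = 0 := by rw [← habs, hz0]; simp
    exact hdeg w hw (by rwa [dist_comm, dist_eq_zero] at this)
  set θ : V → ℝ := fun w => (z w * conj (z v)).arg with hθdef
  have hvne : z v ≠ 0 := hzne v hvS
  have hnsq : ∀ w : V, z w * conj (z w) = (Complex.normSq (z w) : ℂ) := fun w => Complex.mul_conj _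
  -- the main covering step
  have cover : ∀ u ∈ S, ∀ w ∈ S, dist p (pos u) ≤ dist p (pos w) → |θ u - θ w| ≤ π / 3 →
      dist (pos u) (pos w) < r w := by
    intro u hu w hw hle hang
    set a := dist p (pos u) with ha
    set b := dist p (pos w) with hb
    have ha0 : 0 ≤ a := dist_nonneg
    have hb0 : 0 ≤ b := dist_nonneg
    have hbr : b < r w := hw
    have hune : z u ≠ 0 := hzne u hu
    have hwne : z w ≠ 0 := hzne w hw
    have hAne : z u * conj (z v) ≠ 0 := mul_ne_zero hune (by simpa using hvne)
    have hBne : z w * conj (z v) ≠ 0 := mul_ne_zero hwne (by simpa using hvne)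
    have hre : a * b / 2 ≤ (z u * conj (z w)).re := by
      have h1 := half_le_re (z u * conj (z v)) (z w * conj (z v)) hAne hBne hang
      have h2 : (z u * conj (z v)) * conj (z w * conj (z v))
          = (Complex.normSq (z v) : ℂ) * (z u * conj (z w)) := by
        rw [map_mul, Complex.conj_conj]
        have e : ∀ A B C : ℂ, A * conj C * (conj B * C) = (C * conj C) * (A * conj B) :=
          fun _ _ _ => by ring
        rw [e, hnsq v]
      rw [h2] at h1
      rw [Complex.re_ofReal_mul] at h1
      have h3 : ‖z u * conj (z v)‖ * ‖z w * conj (z v)‖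
          = a * b * Complex.normSq (z v) := by
        simp only [norm_mul, Complex.norm_conj]
        rw [habs u, habs w, ← Complex.sq_norm]
        ring
      rw [h3] at h1
      have hpos : 0 < Complex.normSq (z v) := by
        rwa [Complex.normSq_pos]
      nlinarith
    have hdsq : dist (pos u) (pos w) ^ 2 = a ^ 2 + b ^ 2 - 2 * (z u * conj (z w)).re := by
      have : dist (pos u) (pos w) = ‖z u - z w‖ := by
        rw [hzdef]; simp only; rw [sub_sub_sub_cancel_right, ← Complex.dist_eq, dist_toC]
      rw [this, Complex.sq_norm, Complex.normSq_sub, ← Complex.sq_norm, ← Complex.sq_norm,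
        habs u, habs w]
    have hlt : dist (pos u) (pos w) ^ 2 < r w ^ 2 := by nlinarith
    exact lt_of_pow_lt_pow_left₀ 2 (le_trans hb0 (le_of_lt hbr)) hlt
  -- θ v = 0
  have hθv : θ v = 0 := by
    rw [hθdef]; simp only
    rw [hnsq v, Complex.arg_ofReal_of_nonneg (Complex.normSq_nonneg _)]
  have hθlo : ∀ w : V, -π < θ w := fun w => Complex.neg_pi_lt_arg _
  have hθhi : ∀ w : V, θ w ≤ π := fun w => Complex.arg_le_pi _
  -- buckets
  have hbucket : ∀ T : Set V, T ⊆ S → (∀ x ∈ T, ∀ y ∈ T, |θ x - θ y| ≤ π / 3) → T.ncard ≤ h := by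
    intro T hTS hang
    rcases T.eq_empty_or_nonempty with rfl | hTne
    · simp
    obtain ⟨u, huT, humin⟩ := Set.exists_min_image T (fun w => dist p (pos w)) T.toFinite hTne
    have hsub : T ⊆ {w : V | dist (pos u) (pos w) < r w} := by
      intro w hw
      exact cover u (hTS huT) w (hTS hw) (humin w hw) (hang u huT w hw)
    calc T.ncard ≤ ({w : V | dist (pos u) (pos w) < r w}).ncard :=
          Set.ncard_le_ncard hsub (Set.toFinite _)
      _ ≤ h := hvp u
  have hpi : 0 < π := Real.pi_pos
  set S0 : Set V := {w ∈ S | |θ w| ≤ π / 3} with hS0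
  set S1 : Set V := {w ∈ S | π / 3 < θ w ∧ θ w ≤ 2 * π / 3} with hS1
  set S2 : Set V := {w ∈ S | 2 * π / 3 < θ w} with hS2
  set S3 : Set V := {w ∈ S | θ w < -(2 * π / 3)} with hS3
  set S4 : Set V := {w ∈ S | -(2 * π / 3) ≤ θ w ∧ θ w < -(π / 3)} with hS4
  have hcover : S ⊆ S0 ∪ S1 ∪ S2 ∪ S3 ∪ S4 := by
    intro w hw
    simp only [hS0, hS1, hS2, hS3, hS4, Set.mem_union, Set.mem_setOf_eq, Set.mem_sep_iff]
    rcases le_or_gt (|θ w|) (π / 3) with h0 | h0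
    · exact Or.inl (Or.inl (Or.inl (Or.inl ⟨hw, h0⟩)))
    rcases abs_cases (θ w) with ⟨he, hge⟩ | ⟨he, hge⟩
    · rcases le_or_gt (θ w) (2 * π / 3) with h1 | h1
      · exact Or.inl (Or.inl (Or.inl (Or.inr ⟨hw, by linarith, h1⟩)))
      · exact Or.inl (Or.inl (Or.inr ⟨hw, h1⟩))
    · rcases le_or_gt (-(2 * π / 3)) (θ w) with h1 | h1
      · exact Or.inr ⟨hw, h1, by linarith⟩
      · exact Or.inl (Or.inr ⟨hw, h1⟩)
  -- S0 via v
  have h0 : S0.ncard ≤ h := by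
    have hsub : S0 ⊆ {w : V | dist (pos v) (pos w) < r w} := by
      intro w hw
      obtain ⟨hwS, hwθ⟩ := hw
      refine cover v hvS w hwS (hvmin w hwS) ?_
      rw [hθv]
      simpa using hwθ
    calc S0.ncard ≤ ({w : V | dist (pos v) (pos w) < r w}).ncard :=
          Set.ncard_le_ncard hsub (Set.toFinite _)
      _ ≤ h := hvp v
  have h1 : S1.ncard ≤ h := by
    refine hbucket S1 (fun w hw => hw.1) ?_
    rintro x ⟨-, hx1, hx2⟩ y ⟨-, hy1, hy2⟩
    rw [abs_sub_le_iff]; constructor <;> linarith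
  have h2 : S2.ncard ≤ h := by
    refine hbucket S2 (fun w hw => hw.1) ?_
    rintro x ⟨-, hx1⟩ y ⟨-, hy1⟩
    have := hθhi x; have := hθhi y
    rw [abs_sub_le_iff]; constructor <;> linarith
  have h3 : S3.ncard ≤ h := by
    refine hbucket S3 (fun w hw => hw.1) ?_
    rintro x ⟨-, hx1⟩ y ⟨-, hy1⟩
    have := hθlo x; have := hθlo y
    rw [abs_sub_le_iff]; constructor <;> linarith
  have h4 : S4.ncard ≤ h := by
    refine hbucket S4 (fun w hw => hw.1) ?_
    rintro x ⟨-, hx1, hx2⟩ y ⟨-, hy1, hy2⟩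
    rw [abs_sub_le_iff]; constructor <;> linarith
  calc S.ncard ≤ (S0 ∪ S1 ∪ S2 ∪ S3 ∪ S4).ncard :=
        Set.ncard_le_ncard hcover (Set.toFinite _)
    _ ≤ (S0 ∪ S1 ∪ S2 ∪ S3).ncard + S4.ncard := Set.ncard_union_le _ _
    _ ≤ ((S0 ∪ S1 ∪ S2).ncard + S3.ncard) + S4.ncard := by
        gcongr; exact Set.ncard_union_le _ _
    _ ≤ (((S0 ∪ S1).ncard + S2.ncard) + S3.ncard) + S4.ncard := by
        gcongr; exact Set.ncard_union_le _ _
    _ ≤ (((S0.ncard + S1.ncard) + S2.ncard) + S3.ncard) + S4.ncard := by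
        gcongr; exact Set.ncard_union_le _ _
    _ ≤ 5 * h := by omega

end PlyAux

theorem stmt1 {V : Type*} [Fintype V] (G : SimpleGraph V)
    (pos : V → EuclideanSpace ℝ (Fin 2)) (hinj : Function.Injective pos)
    (h : ℕ)
    (hvp : ∀ u : V, {v : V | dist (pos u) (pos v) < plyRadius G pos v}.ncard ≤ h) :
    ∀ p : EuclideanSpace ℝ (Fin 2),
      {v : V | dist p (pos v) < plyRadius G pos v}.ncard ≤ 5 * h :=
  fun p => key pos (plyRadius G pos) h hvp p
end

section
/- The ply of an empty-ply drawing of a graph is at most 5. That is, if Γ is a straight-line drawing of a graph in the plane in which no ply-disk contains any vertex other than its center in its interior, then no point of the plane lies in the interior of more than 5 ply-disks. -/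
open Real EuclideanGeometry Metric

/-!
If `p` lies in the ply-disks of two distinct vertices `u` and `v`, the empty-ply condition gives
`|pu| < r_u ≤ |uv|` and `|pv| < r_v ≤ |uv|`, so `uv` is the strictly longest side of the triangle
`puv` and the angle at `p` exceeds `π / 3`. Six directions around `p` cannot pairwise make angles
larger than `π / 3`: after sorting their arguments, the five consecutive gaps would add up to more
than `5π / 3`, leaving less than `π / 3` between the first and the last one.
-/

open scoped InnerProductSpace

lemma exists_ne_half_le_cos_sub {a : ℝ} (θ : Fin 6 → ℝ)
    (hθ : ∀ i, θ i ∈ Set.Icc a (a + 2 * π)) :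
    ∃ i j, i ≠ j ∧ 1 / 2 ≤ cos (θ i - θ j) := by
  by_contra! h
  set σ := Tuple.sort θ
  have hmono : Monotone (θ ∘ σ) := Tuple.monotone_sort θ
  have gap : ∀ i j : Fin 6, i < j → π / 3 < θ (σ j) - θ (σ i) := by
    intro i j hij
    by_contra! hle
    refine (h (σ j) (σ i) (σ.injective.ne hij.ne')).not_ge ?_
    rw [← cos_pi_div_three]
    exact cos_le_cos_of_nonneg_of_le_pi (sub_nonneg.2 (hmono hij.le))
      (by linarith [pi_pos]) hle
  have wrap : 1 / 2 ≤ cos (θ (σ 5) - θ (σ 0)) := by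
    have hspan : 5 * (π / 3) < θ (σ 5) - θ (σ 0) := by
      linarith [gap 0 1 (by decide), gap 1 2 (by decide), gap 2 3 (by decide),
        gap 3 4 (by decide), gap 4 5 (by decide)]
    have hle : θ (σ 5) - θ (σ 0) ≤ 2 * π := by linarith [(hθ (σ 5)).2, (hθ (σ 0)).1]
    rw [← cos_two_pi_sub, ← cos_pi_div_three]
    exact cos_le_cos_of_nonneg_of_le_pi (by linarith) (by linarith [pi_pos]) (by linarith)
  exact (h _ _ (σ.injective.ne (by decide))).not_ge wrap

lemma Complex.inner_eq_norm_mul_norm_mul_cos_arg_sub (z w : ℂ) :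
    ⟪z, w⟫_ℝ = ‖z‖ * ‖w‖ * Real.cos (z.arg - w.arg) := by
  rw [Complex.inner, Real.cos_sub, Complex.mul_re, Complex.conj_re, Complex.conj_im,
    ← norm_mul_cos_arg z, ← norm_mul_cos_arg w, ← norm_mul_sin_arg z, ← norm_mul_sin_arg w]
  ring

lemma Complex.exists_ne_half_mul_norm_le_inner (z : Fin 6 → ℂ) :
    ∃ i j, i ≠ j ∧ ‖z i‖ * ‖z j‖ / 2 ≤ ⟪z i, z j⟫_ℝ := by
  obtain ⟨i, j, hij, hcos⟩ := exists_ne_half_le_cos_sub (a := -π) (fun i => (z i).arg)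
    fun i => ⟨(Complex.neg_pi_lt_arg _).le, by linarith [Complex.arg_le_pi (z i), pi_pos]⟩
  refine ⟨i, j, hij, ?_⟩
  rw [Complex.inner_eq_norm_mul_norm_mul_cos_arg_sub, div_eq_mul_one_div]
  exact mul_le_mul_of_nonneg_left hcos (by positivity)

lemma exists_ne_half_mul_norm_le_inner_of_finrank_eq_two {E : Type*} [NormedAddCommGroup E]
    [InnerProductSpace ℝ E] (hE : Module.finrank ℝ E = 2) (x : Fin 6 → E) :
    ∃ i j, i ≠ j ∧ ‖x i‖ * ‖x j‖ / 2 ≤ ⟪x i, x j⟫_ℝ := by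
  have := Module.finite_of_finrank_eq_succ hE
  let e : E ≃ₗᵢ[ℝ] ℂ :=
    (Complex.isometryOfOrthonormal ((stdOrthonormalBasis ℝ E).reindex (finCongr hE))).symm
  obtain ⟨i, j, hij, h⟩ := Complex.exists_ne_half_mul_norm_le_inner (e ∘ x)
  exact ⟨i, j, hij, by simpa only [Function.comp, e.norm_map, e.inner_map_map] using h⟩

lemma ncard_le_five_of_pairwise_inner_lt {ι E : Type*} [NormedAddCommGroup E]
    [InnerProductSpace ℝ E] (hE : Module.finrank ℝ E = 2) (x : ι → E) {s : Set ι}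
    (hs : s.Pairwise fun i j => ⟪x i, x j⟫_ℝ < ‖x i‖ * ‖x j‖ / 2) : s.ncard ≤ 5 := by
  by_contra! h
  have := (Set.finite_of_ncard_pos (by omega : 0 < s.ncard)).fintype
  obtain ⟨f⟩ : Nonempty (Fin 6 ↪ s) := Function.Embedding.nonempty_of_card_le <| by
    rwa [Fintype.card_fin, ← Nat.card_eq_fintype_card, Nat.card_coe_set_eq]
  obtain ⟨i, j, hij, hle⟩ := exists_ne_half_mul_norm_le_inner_of_finrank_eq_two hE (x ∘ (↑) ∘ f)
  exact (hs (f i).2 (f j).2 fun h => hij (f.injective (Subtype.ext h))).not_ge hle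

lemma inner_lt_half_mul_norm_mul_norm_of_norm_lt_norm_sub {F : Type*} [NormedAddCommGroup F]
    [InnerProductSpace ℝ F] {x y : F} (hx : ‖x‖ < ‖x - y‖) (hy : ‖y‖ < ‖x - y‖) :
    ⟪x, y⟫_ℝ < ‖x‖ * ‖y‖ / 2 := by
  have hx2 := pow_lt_pow_left₀ hx (norm_nonneg x) two_ne_zero
  have hy2 := pow_lt_pow_left₀ hy (norm_nonneg y) two_ne_zero
  rw [norm_sub_sq_real] at hx2 hy2
  rcases le_total ‖x‖ ‖y‖ with h | h <;> nlinarith [norm_nonneg x, norm_nonneg y]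

lemma IsEmptyPly.dist_lt_dist {V : Type*} {G : SimpleGraph V}
    {pos : V → EuclideanSpace ℝ (Fin 2)} (hep : IsEmptyPly G pos) {u v : V} (huv : u ≠ v)
    {p : EuclideanSpace ℝ (Fin 2)} (hu : dist p (pos u) < plyRadius G pos u) :
    dist p (pos u) < dist (pos u) (pos v) :=
  hu.trans_le <| (hep v u huv.symm).trans_eq (dist_comm _ _)

theorem stmt2_general {V : Type*} (G : SimpleGraph V)
    (pos : V → EuclideanSpace ℝ (Fin 2))
    (hep : IsEmptyPly G pos) :
    ∀ p : EuclideanSpace ℝ (Fin 2),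
      {v : V | dist p (pos v) < plyRadius G pos v}.ncard ≤ 5 := by
  intro p
  refine ncard_le_five_of_pairwise_inner_lt finrank_euclideanSpace_fin (fun v => pos v - p) ?_
  intro u hu v hv huv
  have hdist : ‖(pos u - p) - (pos v - p)‖ = dist (pos u) (pos v) := by
    rw [sub_sub_sub_cancel_right, dist_eq_norm]
  apply inner_lt_half_mul_norm_mul_norm_of_norm_lt_norm_sub
  · rw [hdist, ← dist_eq_norm, dist_comm]
    exact hep.dist_lt_dist huv hu
  · rw [hdist, ← dist_eq_norm, dist_comm, dist_comm (pos u)]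
    exact hep.dist_lt_dist huv.symm hv

theorem stmt2 {V : Type*} [Fintype V] (G : SimpleGraph V)
    (pos : V → EuclideanSpace ℝ (Fin 2)) (hinj : Function.Injective pos)
    (hep : IsEmptyPly G pos) :
    ∀ p : EuclideanSpace ℝ (Fin 2),
      {v : V | dist p (pos v) < plyRadius G pos v}.ncard ≤ 5 :=
  stmt2_general G pos hep
end

section
/- In an empty-ply drawing, the sum of the areas of all ply-disks D_v over all vertices v does not exceed 4 times the area (Lebesgue measure) of their union. -/
open Real EuclideanGeometry Metric

lemma plyRadius_nonneg {V : Type*} (G : SimpleGraph V)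
    (pos : V → EuclideanSpace ℝ (Fin 2)) (v : V) : 0 ≤ plyRadius G pos v := by
  have : (0:ℝ) ≤ ⨆ w ∈ G.neighborSet v, dist (pos v) (pos w) :=
    Real.iSup_nonneg fun w => Real.iSup_nonneg fun _ => dist_nonneg
  unfold plyRadius
  positivity

theorem stmt4 {V : Type*} [Fintype V] (G : SimpleGraph V)
    (pos : V → EuclideanSpace ℝ (Fin 2)) (hinj : Function.Injective pos)
    (hep : IsEmptyPly G pos) :
    ∑ v : V, MeasureTheory.volume (Metric.ball (pos v) (plyRadius G pos v)) ≤
      4 * MeasureTheory.volume (⋃ v : V, Metric.ball (pos v) (plyRadius G pos v)) := by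
  set r := fun v => plyRadius G pos v with hr
  have hr0 : ∀ v, 0 ≤ r v := plyRadius_nonneg G pos
  -- scaling: volume of big ball = 4 * volume of half ball
  have hscale : ∀ v, MeasureTheory.volume (Metric.ball (pos v) (r v)) =
      4 * MeasureTheory.volume (Metric.ball (pos v) (r v / 2)) := by
    intro v
    rw [MeasureTheory.Measure.addHaar_ball _ _ (hr0 v),
        MeasureTheory.Measure.addHaar_ball _ _ (by linarith [hr0 v] : (0:ℝ) ≤ r v / 2)]
    have hd : Module.finrank ℝ (EuclideanSpace ℝ (Fin 2)) = 2 := by simp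
    rw [hd, ← mul_assoc]
    congr 1
    rw [← ENNReal.ofReal_ofNat, ← ENNReal.ofReal_mul (by norm_num)]
    congr 1
    ring
  -- disjointness of half balls
  have hdisj : Pairwise fun u v =>
      Disjoint (Metric.ball (pos u) (r u / 2)) (Metric.ball (pos v) (r v / 2)) := by
    intro u v huv
    apply Metric.ball_disjoint_ball
    have h1 := hep v u huv.symm
    have h2 := hep u v huv
    rw [dist_comm] at h1
    linarith
  have hmeas : MeasureTheory.volume (⋃ v : V, Metric.ball (pos v) (r v / 2)) =
      ∑ v : V, MeasureTheory.volume (Metric.ball (pos v) (r v / 2)) := by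
    rw [MeasureTheory.measure_iUnion hdisj (fun v => measurableSet_ball), tsum_fintype]
  calc ∑ v : V, MeasureTheory.volume (Metric.ball (pos v) (r v))
      = 4 * ∑ v : V, MeasureTheory.volume (Metric.ball (pos v) (r v / 2)) := by
        rw [Finset.mul_sum]; exact Finset.sum_congr rfl fun v _ => hscale v
    _ = 4 * MeasureTheory.volume (⋃ v : V, Metric.ball (pos v) (r v / 2)) := by rw [hmeas]
    _ ≤ 4 * MeasureTheory.volume (⋃ v : V, Metric.ball (pos v) (r v)) := by
        gcongr with v
        linarith [hr0 v]
end

section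
/- Let α = 2π/13 and suppose q ∈ [1, √2] satisfies q²/4 ≤ 1 + q² − 2q·cos α. Then we reach a contradiction; i.e., no q ∈ [1, √2] satisfies q²/4 ≤ 1 + q² − 2q·cos(2π/13). Equivalently, for all q ∈ [1, √2], 1 + q² − 2q·cos(2π/13) < q²/4. -/
/-!
Write `c = cos (2π/13)`. The claim says that the convex quadratic `3/4 q² - 2 c q + 1` is negative
on `[1, √2]`, so it suffices to check the two endpoints, which needs `c > 7/8` and `c² > 25/32`.
Both follow from `c ≈ 0.8855`, obtained from `cos t ≥ 1 - t²/2` at `t = π/13` and the double-angle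
formula; applying the quadratic bound directly at `2π/13` would only give `c ≥ 0.883`.
-/

open Real

lemma quadratic_neg_of_neg_of_neg {a b c l u q : ℝ} (ha : 0 ≤ a)
    (hl : a * l ^ 2 + b * l + c < 0) (hu : a * u ^ 2 + b * u + c < 0)
    (hlq : l ≤ q) (hqu : q ≤ u) : a * q ^ 2 + b * q + c < 0 := by
  rcases hlq.eq_or_lt with rfl | hlq
  · exact hl
  -- `(u - l) f(q) = (u - q) f(l) + (q - l) f(u) - a (q - l) (u - q) (u - l)`
  have hcomb : (u - l) * (a * q ^ 2 + b * q + c) < 0 := by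
    nlinarith [mul_nonneg (mul_nonneg ha (sub_nonneg.2 hlq.le)) (sub_nonneg.2 hqu),
      mul_nonneg (sub_nonneg.2 hlq.le) (sub_nonneg.2 hqu)]
  exact neg_of_mul_neg_right hcomb (by linarith)

lemma two_mul_one_sub_sq_div_two_sq_sub_one_le_cos_two_mul {x : ℝ} (hx : x ^ 2 ≤ 2) :
    2 * (1 - x ^ 2 / 2) ^ 2 - 1 ≤ cos (2 * x) := by
  have hcos : 1 - x ^ 2 / 2 ≤ cos x := one_sub_sq_div_two_le_cos
  rw [cos_two_mul]
  nlinarith [pow_le_pow_left₀ (by linarith) hcos 2]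

lemma cos_two_pi_div_thirteen_gt : 0.8848 < cos (2 * π / 13) := by
  have ht : π / 13 < 0.24167 := by linarith [pi_lt_d6]
  have ht0 : 0 < π / 13 := by positivity
  have hsq : (π / 13) ^ 2 < 0.05841 := by nlinarith
  calc (0.8848 : ℝ) < 2 * (1 - (π / 13) ^ 2 / 2) ^ 2 - 1 := by nlinarith
    _ ≤ cos (2 * (π / 13)) :=
        two_mul_one_sub_sq_div_two_sq_sub_one_le_cos_two_mul (by linarith)
    _ = cos (2 * π / 13) := by ring_nf

theorem stmt8 : ∀ q ∈ Set.Icc (1 : ℝ) (Real.sqrt 2),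
    1 + q ^ 2 - 2 * q * Real.cos (2 * π / 13) < q ^ 2 / 4 := by
  rintro q ⟨h1, h2⟩
  set c := cos (2 * π / 13)
  have hc : 0.8848 < c := cos_two_pi_div_thirteen_gt
  have hsqrt2 : √2 ^ 2 = 2 := sq_sqrt zero_le_two
  have hat_sqrt2 : 5 / 2 < 2 * √2 * c := by
    refine lt_of_pow_lt_pow_left₀ 2 (by positivity) ?_
    rw [mul_pow, mul_pow, hsqrt2]
    nlinarith
  have key := quadratic_neg_of_neg_of_neg (a := 3 / 4) (b := -2 * c) (c := 1) (by norm_num)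
    (by linarith) (by nlinarith) h1 h2
  linarith
end

section
/- Let v, u, w be points in ℝ² with |vu| = 1, |vw| = q where q ∈ [1, √2], and the angle ∠(u, v, w) = α ≤ 2π/13. If additionally |uw| ≥ q/2, then a contradiction follows. In other words, if |vu| = 1, 1 ≤ |vw| ≤ √2, and the angle at v between u and w is at most 2π/13, then |uw| < |vw|/2. -/
open Real EuclideanGeometry

theorem stmt9 (v u w : EuclideanSpace ℝ (Fin 2))
    (h1 : dist v u = 1) (h2 : 1 ≤ dist v w) (h3 : dist v w ≤ Real.sqrt 2)
    (hang : ∠ u v w ≤ 2 * π / 13) :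
    dist u w < dist v w / 2 := by
  have hpi : π < 3.141593 := Real.pi_lt_d6
  have hx : (2 : ℝ) * π / 13 ≤ 0.4834 := by nlinarith [Real.pi_gt_three, hpi]
  have hxpos : (0 : ℝ) ≤ 2 * π / 13 := by positivity
  -- cosine lower bound via double angle
  have hcosq : Real.cos (∠ u v w) ≥ 0.8845 := by
    have h1' : Real.cos 0.4834 ≤ Real.cos (∠ u v w) := by
      apply Real.cos_le_cos_of_nonneg_of_le_pi (angle_nonneg _ _ _)
      · nlinarith [Real.pi_gt_three, hpi]
      · exact hang.trans hx
    have hhalf : (1 : ℝ) - (0.2417 : ℝ)^2 / 2 ≤ Real.cos 0.2417 :=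
      Real.one_sub_sq_div_two_le_cos
    have hdouble : Real.cos 0.4834 = 2 * Real.cos 0.2417 ^ 2 - 1 := by
      rw [show (0.4834 : ℝ) = 2 * 0.2417 by norm_num, Real.cos_two_mul]
    nlinarith [Real.cos_le_one 0.2417]
  have hq2 : dist v w ^ 2 ≤ 2 := by
    nlinarith [Real.sq_sqrt (by norm_num : (0:ℝ) ≤ 2), dist_nonneg (x := v) (y := w), h3]
  have hlc := EuclideanGeometry.law_cos u v w
  have h1'' : dist u v = 1 := by rw [dist_comm]; exact h1
  have h3' : dist w v = dist v w := dist_comm w v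
  have hnn : 0 ≤ dist u w := dist_nonneg
  have hsq : dist u w * dist u w < (dist v w / 2) * (dist v w / 2) := by
    rw [hlc, h1'', h3']
    nlinarith [mul_nonneg (sub_nonneg.2 h2) (sub_nonneg.2 hq2),
      mul_le_mul_of_nonneg_left hcosq (by nlinarith : (0:ℝ) ≤ 2 * dist v w)]
  nlinarith [dist_nonneg (x := v) (y := w)]
end

section
/- No vertex of a graph admitting an empty-ply drawing has degree greater than 24. That is, if Γ is an empty-ply straight-line drawing of a finite graph G in the plane, then every vertex of G has at most 24 neighbors. -/
open Real EuclideanGeometry Metric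

/-!
Let `v` have at least 25 neighbours and let `M` be twice its ply radius. Empty-ply at `v` puts
every neighbour at distance between `M / 2` and `M` from `v`, and empty-ply at a neighbour `w`
keeps every other vertex at distance at least `|vw| / 2` from `w`. Splitting the neighbours at
distance `M / √2`, one class has 13 members whose distances from `v` agree up to a factor `√2`;
by the pigeonhole principle on the circle two of them, `u` and `w`, subtend an angle at most
`2π / 13` at `v`, and the law of cosines then forces `|uw| < |vw| / 2`.
-/

namespace Real

theorem exists_ne_cos_two_pi_div_le_cos_sub {n : ℕ} (hn : 2 ≤ n) (θ : Fin n → ℝ)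
    (hθ : ∀ i j, θ i - θ j < 2 * π) :
    ∃ i j, i ≠ j ∧ cos (2 * π / n) ≤ cos (θ i - θ j) := by
  obtain ⟨m, rfl⟩ := Nat.exists_eq_add_of_le' hn
  by_contra! h
  set α := 2 * π / (m + 2 : ℕ) with hα
  have hα_le_pi : α ≤ π := by
    rw [hα, div_le_iff₀ (by positivity)]; push_cast; nlinarith [pi_pos]
  set σ := Tuple.sort θ
  -- once sorted, both the gaps between the points and the wrap-around gap exceed `α`
  have gap : ∀ i j, i < j →
      α < θ (σ j) - θ (σ i) ∧ α < 2 * π - (θ (σ j) - θ (σ i)) := by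
    intro i j hij
    have hcos := h (σ j) (σ i) (σ.injective.ne hij.ne')
    have hsorted : θ (σ i) ≤ θ (σ j) := Tuple.monotone_sort θ hij.le
    refine ⟨lt_of_not_ge fun hle => ?_, lt_of_not_ge fun hle => ?_⟩
    · exact hcos.not_ge (cos_le_cos_of_nonneg_of_le_pi (by linarith) hα_le_pi hle)
    · have := cos_le_cos_of_nonneg_of_le_pi (by linarith [hθ (σ j) (σ i)]) hα_le_pi hle
      rw [cos_two_pi_sub] at this
      exact hcos.not_ge this
  have spread : ∀ i : Fin (m + 2), (i : ℕ) * α ≤ θ (σ i) - θ (σ 0) := by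
    intro i
    induction i using Fin.induction with
    | zero => simp
    | succ i ih =>
      have := (gap _ _ i.castSucc_lt_succ).1
      simp only [Fin.val_succ, Fin.val_castSucc] at ih ⊢
      push_cast
      linarith
  have hlast := spread (Fin.last _)
  have hwrap := (gap 0 (Fin.last _) Fin.last_pos).2
  have hfull : ((m + 2 : ℕ) : ℝ) * α = 2 * π := by rw [hα]; field_simp
  simp only [Fin.val_last] at hlast
  push_cast at hlast hfull
  linarith

-- `1 - x ^ 2 / 2 ≤ cos x` at `x = 2π / 13` falls just short, so it is applied at `π / 13`.
theorem lt_cos_two_pi_div_thirteen : 0.884 < cos (2 * π / 13) := by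
  have hcos_half : 0.97064 < cos (π / 13) :=
    lt_of_lt_of_le (by nlinarith [pi_pos, pi_lt_d2]) (one_sub_sq_div_two_le_cos (x := π / 13))
  rw [show 2 * π / 13 = 2 * (π / 13) by ring, cos_two_mul]
  nlinarith

end Real

namespace InnerProductGeometry

variable {V : Type*} [NormedAddCommGroup V] [InnerProductSpace ℝ V]
  [Fact (Module.finrank ℝ V = 2)]

theorem exists_ne_angle_le_two_pi_div {n : ℕ} (hn : 2 ≤ n) (x : Fin n → V)
    (hx : ∀ i, x i ≠ 0) : ∃ i j, i ≠ j ∧ angle (x i) (x j) ≤ 2 * π / n := by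
  have : FiniteDimensional ℝ V := .of_fact_finrank_eq_two
  let o : Orientation ℝ V (Fin 2) := (Module.finBasisOfFinrankEq ℝ V Fact.out).orientation
  let x₀ := x ⟨0, by omega⟩
  let θ i := (o.oangle x₀ (x i)).toReal
  have hθ : ∀ i j, θ i - θ j < 2 * π := fun i j => by
    linarith [Real.Angle.toReal_le_pi (o.oangle x₀ (x i)),
      Real.Angle.neg_pi_lt_toReal (o.oangle x₀ (x j))]
  obtain ⟨i, j, hij, hcos⟩ := Real.exists_ne_cos_two_pi_div_le_cos_sub hn θ hθ
  have hcos_eq : cos (θ i - θ j) = cos (angle (x j) (x i)) := by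
    rw [← Real.Angle.cos_coe, Real.Angle.coe_sub, Real.Angle.coe_toReal, Real.Angle.coe_toReal,
      o.oangle_sub_left (hx _) (hx _) (hx _), o.cos_oangle_eq_cos_angle (hx _) (hx _)]
  refine ⟨j, i, hij.symm, le_of_not_gt fun hlt => ?_⟩
  exact (hcos_eq ▸ hcos).not_gt
    (cos_lt_cos_of_nonneg_of_le_pi (by positivity) (angle_le_pi _ _) hlt)

end InnerProductGeometry

theorem Set.exists_lt_ncard_sq_le_two_mul_sq {α : Type*} {S : Set α} {f : α → ℝ} {M : ℝ}
    {n : ℕ} (hf : ∀ a ∈ S, M ≤ 2 * f a ∧ f a ≤ M) (hS : 2 * n < S.ncard) :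
    ∃ T ⊆ S, n < T.ncard ∧ ∀ a ∈ T, ∀ b ∈ T, f b ^ 2 ≤ 2 * f a ^ 2 := by
  let A := {a | 2 * f a ^ 2 ≤ M ^ 2}
  rw [← Set.inter_union_sdiff S A] at hS
  obtain ⟨T, hT, hTA | hTA⟩ := Set.exists_subset_or_subset_of_two_mul_lt_ncard hS
  · refine ⟨T, hTA.trans Set.inter_subset_left, hT, fun a ha b hb => ?_⟩
    have hbA : 2 * f b ^ 2 ≤ M ^ 2 := (hTA hb).2
    have := hf a (hTA ha).1
    nlinarith
  · refine ⟨T, hTA.trans Set.sdiff_subset, hT, fun a ha b hb => ?_⟩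
    have haA : M ^ 2 < 2 * f a ^ 2 := lt_of_not_ge (hTA ha).2
    have := hf b (hTA hb).1
    nlinarith

namespace EuclideanGeometry

variable {V P : Type*} [NormedAddCommGroup V] [InnerProductSpace ℝ V] [MetricSpace P]
  [NormedAddTorsor V P]

theorem exists_ne_angle_le_two_pi_div [Fact (Module.finrank ℝ V = 2)] (v : P) {T : Set P}
    (hv : v ∉ T) (hT : 2 ≤ T.ncard) :
    ∃ p ∈ T, ∃ q ∈ T, p ≠ q ∧ ∠ p v q ≤ 2 * π / T.ncard := by
  have : Finite T := (Set.finite_of_ncard_pos (by omega)).to_subtype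
  let e : T ≃ Fin T.ncard := Finite.equivFin T
  obtain ⟨i, j, hij, hangle⟩ := InnerProductGeometry.exists_ne_angle_le_two_pi_div hT
    (fun k => (e.symm k : P) -ᵥ v)
    (fun k => vsub_ne_zero.2 fun h => hv (h ▸ (e.symm k).2))
  exact ⟨e.symm i, (e.symm i).2, e.symm j, (e.symm j).2,
    Subtype.coe_injective.ne (e.symm.injective.ne hij), hangle⟩

theorem two_mul_dist_lt_of_angle_le_two_pi_div_thirteen {u v w : P} (huv : u ≠ v)
    (hle : dist v u ≤ dist v w) (hsq : dist v w ^ 2 ≤ 2 * dist v u ^ 2)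
    (hangle : ∠ u v w ≤ 2 * π / 13) : 2 * dist u w < dist v w := by
  -- at the extreme ratio `√2` the law of cosines needs `cos (∠ u v w) > 5 √2 / 8 ≈ 0.8839`
  have hcos : 0.884 < cos (∠ u v w) := Real.lt_cos_two_pi_div_thirteen.trans_le
    (cos_le_cos_of_nonneg_of_le_pi (angle_nonneg _ _ _) (by linarith [pi_pos]) hangle)
  have hlaw := law_cos u v w
  rw [dist_comm u v, dist_comm w v] at hlaw
  set r := dist v u
  set s := dist v w
  have hr : 0 < r := dist_pos.2 huv.symm
  have hs : 0 < s := hr.trans_le hle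
  by_contra! hfar
  have hcos_le : 8 * r * s * cos (∠ u v w) ≤ 4 * r ^ 2 + 3 * s ^ 2 := by nlinarith
  have : 0 < 4 * r ^ 2 + 3 * s ^ 2 - 7.072 * r * s := by nlinarith [mul_pos hr hs]
  nlinarith [mul_nonneg (sub_nonneg.2 hle) (sub_nonneg.2 hsq),
    mul_nonneg hr.le (sub_nonneg.2 hsq), pow_pos hr 3]

theorem ncard_le_24_of_separated [Fact (Module.finrank ℝ V = 2)] (v : P) {S : Set P}
    {M : ℝ} (hv : v ∉ S) (hM : ∀ p ∈ S, M ≤ 2 * dist v p ∧ dist v p ≤ M)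
    (hsep : ∀ p ∈ S, ∀ q ∈ S, p ≠ q → dist v q ≤ 2 * dist p q) : S.ncard ≤ 24 := by
  by_contra! hS
  obtain ⟨T, hTS, hT, hratio⟩ := Set.exists_lt_ncard_sq_le_two_mul_sq (n := 12) hM hS
  obtain ⟨p, hp, q, hq, hpq, hangle⟩ :=
    exists_ne_angle_le_two_pi_div v (fun h => hv (hTS h)) (by omega)
  replace hangle : ∠ p v q ≤ 2 * π / 13 := hangle.trans <| by
    gcongr
    exact_mod_cast hT
  wlog hle : dist v p ≤ dist v q generalizing p q
  · exact this q hq p hp hpq.symm (by rwa [angle_comm]) (le_of_not_ge hle)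
  have hpv : p ≠ v := fun h => hv (h ▸ hTS hp)
  have hclose := two_mul_dist_lt_of_angle_le_two_pi_div_thirteen hpv hle (hratio p hp q hq) hangle
  exact hclose.not_ge (hsep p (hTS hp) q (hTS hq) hpq)

end EuclideanGeometry

theorem dist_le_two_mul_plyRadius {V : Type*} [Finite V] (G : SimpleGraph V)
    (pos : V → EuclideanSpace ℝ (Fin 2)) {v w : V} (h : G.Adj v w) :
    dist (pos v) (pos w) ≤ 2 * plyRadius G pos v := by
  have hbdd : BddAbove (Set.range fun u => ⨆ _ : u ∈ G.neighborSet v, dist (pos v) (pos u)) :=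
    (Set.finite_range _).bddAbove
  have := le_ciSup hbdd w
  rw [ciSup_pos (show w ∈ G.neighborSet v from h)] at this
  rw [plyRadius]
  linarith

theorem IsEmptyPly.dist_le_two_mul_dist {V : Type*} [Finite V] {G : SimpleGraph V}
    {pos : V → EuclideanSpace ℝ (Fin 2)} (hep : IsEmptyPly G pos) {u v w : V} (hvw : G.Adj v w)
    (huw : u ≠ w) : dist (pos v) (pos w) ≤ 2 * dist (pos u) (pos w) := by
  have := dist_le_two_mul_plyRadius G pos hvw.symm
  rw [dist_comm] at this
  linarith [hep u w huw]

theorem stmt10 {V : Type*} [Fintype V] (G : SimpleGraph V)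
    (pos : V → EuclideanSpace ℝ (Fin 2)) (hinj : Function.Injective pos)
    (hep : IsEmptyPly G pos) :
    ∀ v : V, (G.neighborSet v).ncard ≤ 24 := by
  intro v
  have : Fact (Module.finrank ℝ (EuclideanSpace ℝ (Fin 2)) = 2) :=
    ⟨finrank_euclideanSpace_fin⟩
  rw [← Set.ncard_image_of_injective _ hinj]
  refine ncard_le_24_of_separated (pos v) (M := 2 * plyRadius G pos v) ?_ ?_ ?_
  · rintro ⟨w, hw, hwv⟩
    exact G.irrefl (hinj hwv ▸ hw)
  · rintro _ ⟨w, hw, rfl⟩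
    refine ⟨?_, dist_le_two_mul_plyRadius G pos hw⟩
    rw [dist_comm]
    linarith [hep w v hw.ne']
  · rintro _ ⟨u, -, rfl⟩ _ ⟨w, hw, rfl⟩ huw
    exact hep.dist_le_two_mul_dist hw (hinj.ne_iff.1 huw)
end

section
/- If a set of more than 24 nonzero vectors in ℝ² all have norms within a factor 2 of each other (every norm lies in [m, 2m] for some m > 0), then there exist two of them, say a and b, with ‖a‖ ≤ ‖b‖ ≤ √2·‖a‖ and the angle between a and b at most 2π/13. -/
/-!
Split the vectors by norm into the classes `[m, √2 m]` and `(√2 m, 2m]`; one class holds at least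
13 of them, and within a class any two norms differ by a factor at most `√2`. Measure the
arguments `θ ∈ (-π, π]` of 13 vectors of that class from a common reference vector and sort them:
the 12 consecutive gaps and the wrap-around gap `2π - (θ_max - θ_min)` sum to `2π`, so one of them
is at most `2π/13`, and the corresponding two vectors make an angle at most `2π/13`.
-/

open Real InnerProductGeometry Module

theorem Real.Angle.abs_toReal_coe_le (r : ℝ) : |(r : Real.Angle).toReal| ≤ |r| := by
  rcases le_or_gt π |r| with h | h
  · exact (Real.Angle.abs_toReal_le_pi _).trans h
  · rw [Real.Angle.toReal_coe_eq_self_iff.2 ⟨(abs_lt.1 h).1, (abs_lt.1 h).2.le⟩]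

theorem Finset.card_sub_one_mul_le_max'_sub_min' {T : Finset ℝ} (hT : T.Nonempty) {g : ℝ}
    (hsep : ∀ u ∈ T, ∀ v ∈ T, u < v → g < v - u) :
    ((T.card : ℝ) - 1) * g ≤ T.max' hT - T.min' hT := by
  induction T using Finset.induction_on_max with
  | empty => exact absurd hT Finset.not_nonempty_empty
  | insert a T hlt ih =>
    rcases T.eq_empty_or_nonempty with rfl | hTne
    · simp
    have ha : a ∉ T := fun h => lt_irrefl a (hlt a h)
    have hmax_lt : T.max' hTne < a := hlt _ (T.max'_mem hTne)
    have hgap : g < a - T.max' hTne :=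
      hsep _ (mem_insert_of_mem (T.max'_mem hTne)) a (mem_insert_self a T) hmax_lt
    have hspread := ih hTne fun u hu v hv => hsep u (mem_insert_of_mem hu) v (mem_insert_of_mem hv)
    rw [max'_insert a T hTne, min'_insert a T hTne, max_eq_left hmax_lt.le,
      min_eq_right ((T.min'_le _ (T.max'_mem hTne)).trans hmax_lt.le), card_insert_of_notMem ha]
    push_cast
    linarith

theorem Finset.exists_lt_sub_le_div_card_or (T : Finset ℝ) (hT : 2 ≤ T.card) (L : ℝ) :
    ∃ u ∈ T, ∃ v ∈ T, u < v ∧ (v - u ≤ L / T.card ∨ L - (v - u) ≤ L / T.card) := by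
  by_contra! hfar
  have hTne : T.Nonempty := card_pos.1 (by omega)
  have hspread :=
    T.card_sub_one_mul_le_max'_sub_min' hTne fun u hu v hv huv => (hfar u hu v hv huv).1
  have hwrap :=
    (hfar _ (T.min'_mem hTne) _ (T.max'_mem hTne) (T.min'_lt_max'_of_card (by omega))).2
  have hcard : (T.card : ℝ) ≠ 0 := by positivity
  have : ((T.card : ℝ) - 1) * (L / T.card) + L / T.card = L := by field_simp; ring
  linarith

section TwoDim

variable {V : Type*} [NormedAddCommGroup V] [InnerProductSpace ℝ V] [Fact (finrank ℝ V = 2)]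

attribute [local instance] FiniteDimensional.of_fact_finrank_eq_two

theorem Orientation.angle_le_abs_of_coe_eq_oangle (o : Orientation ℝ V (Fin 2)) {x y : V}
    (hx : x ≠ 0) (hy : y ≠ 0) {r : ℝ} (hr : (r : Real.Angle) = o.oangle x y) :
    angle x y ≤ |r| := by
  rw [o.angle_eq_abs_oangle_toReal hx hy, ← hr]
  exact Real.Angle.abs_toReal_coe_le r

theorem exists_ne_angle_le_two_pi_div_card (s : Finset V) (hs : 2 ≤ s.card)
    (hne : ∀ a ∈ s, a ≠ 0) :
    ∃ a ∈ s, ∃ b ∈ s, a ≠ b ∧ angle a b ≤ 2 * π / s.card := by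
  classical
  obtain ⟨e, he⟩ := Finset.card_pos.1 (by omega : 0 < s.card)
  let o : Orientation ℝ V (Fin 2) := (finBasisOfFinrankEq ℝ V Fact.out).orientation
  -- the argument of `x`, measured from the reference vector `e ∈ s`
  let θ : V → ℝ := fun x => (o.oangle e x).toReal
  have hθ_sub : ∀ x ∈ s, ∀ y ∈ s, ((θ y - θ x : ℝ) : Real.Angle) = o.oangle x y := by
    intro x hx y hy
    rw [Real.Angle.coe_sub, Real.Angle.coe_toReal, Real.Angle.coe_toReal,
      o.oangle_sub_left (hne e he) (hne x hx) (hne y hy)]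
  by_cases hinj : Set.InjOn θ s
  · obtain ⟨u, hu, v, hv, huv, hclose⟩ := (s.image θ).exists_lt_sub_le_div_card_or
      (by rwa [Finset.card_image_of_injOn hinj]) (2 * π)
    rw [Finset.card_image_of_injOn hinj] at hclose
    obtain ⟨x, hx, rfl⟩ := Finset.mem_image.1 hu
    obtain ⟨y, hy, rfl⟩ := Finset.mem_image.1 hv
    refine ⟨x, hx, y, hy, fun h => huv.ne (congrArg θ h), ?_⟩
    rcases hclose with hnear | hwrap
    · refine (o.angle_le_abs_of_coe_eq_oangle (hne x hx) (hne y hy) (hθ_sub x hx y hy)).trans ?_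
      rwa [abs_of_pos (sub_pos.2 huv)]
    · have hθ_wrap : ((θ y - θ x - 2 * π : ℝ) : Real.Angle) = o.oangle x y := by
        rw [Real.Angle.coe_sub _ (2 * π), Real.Angle.coe_two_pi, sub_zero, hθ_sub x hx y hy]
      refine (o.angle_le_abs_of_coe_eq_oangle (hne x hx) (hne y hy) hθ_wrap).trans ?_
      have := Real.Angle.toReal_le_pi (o.oangle e y)
      have := Real.Angle.neg_pi_lt_toReal (o.oangle e x)
      rw [abs_of_neg (by linarith)]
      linarith
  · obtain ⟨x, hx, y, hy, hθxy, hxy⟩ : ∃ x ∈ s, ∃ y ∈ s, θ x = θ y ∧ x ≠ y := by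
      simpa [Set.InjOn] using hinj
    refine ⟨x, hx, y, hy, hxy, ?_⟩
    have := o.angle_le_abs_of_coe_eq_oangle (hne x hx) (hne y hy) (hθ_sub x hx y hy)
    rw [hθxy, sub_self, abs_zero] at this
    exact this.trans (by positivity)

end TwoDim

theorem Finset.exists_subset_two_mul_card_ge_norm_le_sqrt_two_mul {E : Type*}
    [SeminormedAddCommGroup E] (s : Finset E) {m : ℝ}
    (hnorm : ∀ a ∈ s, m ≤ ‖a‖ ∧ ‖a‖ ≤ 2 * m) :
    ∃ t ⊆ s, s.card ≤ 2 * t.card ∧ ∀ a ∈ t, ∀ b ∈ t, ‖b‖ ≤ √2 * ‖a‖ := by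
  classical
  have hsplit := s.card_filter_add_card_filter_not (‖·‖ ≤ √2 * m)
  rcases le_total (s.filter (¬‖·‖ ≤ √2 * m)).card (s.filter (‖·‖ ≤ √2 * m)).card with h | h
  · refine ⟨s.filter (‖·‖ ≤ √2 * m), s.filter_subset _, by omega, fun a ha b hb => ?_⟩
    rw [mem_filter] at ha hb
    calc ‖b‖ ≤ √2 * m := hb.2
      _ ≤ √2 * ‖a‖ := by gcongr; exact (hnorm a ha.1).1
  · refine ⟨s.filter (¬‖·‖ ≤ √2 * m), s.filter_subset _, by omega, fun a ha b hb => ?_⟩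
    rw [mem_filter] at ha hb
    calc ‖b‖ ≤ 2 * m := (hnorm b hb.1).2
      _ = √2 * (√2 * m) := by rw [← mul_assoc, mul_self_sqrt zero_le_two]
      _ ≤ √2 * ‖a‖ := by gcongr; exact le_of_not_ge ha.2

theorem stmt11_general (s : Finset (EuclideanSpace ℝ (Fin 2))) (m : ℝ)
    (hcard : 24 < s.card)
    (hne : ∀ a ∈ s, a ≠ 0)
    (hnorm : ∀ a ∈ s, m ≤ ‖a‖ ∧ ‖a‖ ≤ 2 * m) :
    ∃ a ∈ s, ∃ b ∈ s, a ≠ b ∧ ‖a‖ ≤ ‖b‖ ∧ ‖b‖ ≤ Real.sqrt 2 * ‖a‖ ∧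
      InnerProductGeometry.angle a b ≤ 2 * π / 13 := by
  have : Fact (finrank ℝ (EuclideanSpace ℝ (Fin 2)) = 2) := ⟨finrank_euclideanSpace_fin⟩
  obtain ⟨t, hts, hst, hratio⟩ := s.exists_subset_two_mul_card_ge_norm_le_sqrt_two_mul hnorm
  have ht : 13 ≤ t.card := by omega
  obtain ⟨a, ha, b, hb, hab, hangle⟩ :=
    exists_ne_angle_le_two_pi_div_card t (by omega) fun a ha => hne a (hts ha)
  have hangle13 : angle a b ≤ 2 * π / 13 :=
    hangle.trans (by gcongr; exact_mod_cast ht)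
  rcases le_total ‖a‖ ‖b‖ with hle | hle
  · exact ⟨a, hts ha, b, hts hb, hab, hle, hratio a ha b hb, hangle13⟩
  · exact ⟨b, hts hb, a, hts ha, hab.symm, hle, hratio b hb a ha, angle_comm a b ▸ hangle13⟩

theorem stmt11 (s : Finset (EuclideanSpace ℝ (Fin 2))) (m : ℝ) (hm : 0 < m)
    (hcard : 24 < s.card)
    (hne : ∀ a ∈ s, a ≠ 0)
    (hnorm : ∀ a ∈ s, m ≤ ‖a‖ ∧ ‖a‖ ≤ 2 * m) :
    ∃ a ∈ s, ∃ b ∈ s, a ≠ b ∧ ‖a‖ ≤ ‖b‖ ∧ ‖b‖ ≤ Real.sqrt 2 * ‖a‖ ∧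
      InnerProductGeometry.angle a b ≤ 2 * π / 13 :=
  stmt11_general s m hcard hne hnorm
end

section
/- For every q ∈ (0, 1), the function f(q) = (q − q³/(1 − q²)) · √(1 + q²) − 1/2 is negative; equivalently, (q − q³/(1 − q²)) · √(1 + q²) < 1/2 for all 0 < q < 1. -/
theorem stmt15 : ∀ q ∈ Set.Ioo (0 : ℝ) 1,
    (q - q ^ 3 / (1 - q ^ 2)) * Real.sqrt (1 + q ^ 2) < 1 / 2 := by
  rintro q ⟨hq0, hq1⟩
  have hd : (0:ℝ) < 1 - q ^ 2 := by nlinarith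
  have hA : q - q ^ 3 / (1 - q ^ 2) = (q - 2 * q ^ 3) / (1 - q ^ 2) := by
    field_simp; ring
  rw [hA]
  set s := Real.sqrt (1 + q ^ 2) with hs
  have hs0 : 0 < s := Real.sqrt_pos.mpr (by nlinarith)
  have hs2 : s ^ 2 = 1 + q ^ 2 := Real.sq_sqrt (by nlinarith)
  have hsle : s ≤ 1 + q ^ 2 / 2 := by
    nlinarith [sq_nonneg (s - (1 + q ^ 2 / 2))]
  rw [div_mul_eq_mul_div, div_lt_iff₀ hd]
  rcases le_or_gt (q - 2 * q ^ 3) 0 with h | h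
  · nlinarith
  · nlinarith [mul_le_mul_of_nonneg_left hsle h.le, sq_nonneg (1 - q), sq_nonneg (q - 1/2), sq_nonneg q, mul_pos hq0 hq0]
end
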